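/- Let L be a compact topological orthoalgebra in which 0 is an isolated point. Then L has finite height: there is a finite bound on the length of chains in L. -/
import Mathlib


/-- An orthoalgebra: a partial commutative, associative operation `oplus`
(defined on the relation `perp`), with unique orthocomplements, in which
`a ⊥ a` forces `a = 0`. -/
structure Orthoalgebra (L : Type*) where
  perp : L → L → Prop
  oplus : L → L → L
  compl : L → L
  zero : L
  one : L
  perp_comm : ∀ a b, perp a b → perp b a
  oplus_comm : ∀ a b, perp a b → oplus a b = oplus b a
  assoc : ∀ a b c, perp b c → perp a (oplus b c) →
    perp a b ∧ perp (oplus a b) c ∧ oplus a (oplus b c) = oplus (oplus a b) c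
  perp_compl : ∀ a, perp a (compl a)
  oplus_compl : ∀ a, oplus a (compl a) = one
  compl_unique : ∀ a b, perp a b → oplus a b = one → b = compl a
  perp_self_eq_zero : ∀ a, perp a a → a = zero
  zero_def : compl one = zero

/-- The induced order: `a ≤ b` iff `a ⊥ b'`. -/
def Orthoalgebra.le {L : Type*} (A : Orthoalgebra L) (a b : L) : Prop :=
  A.perp a (A.compl b)

/-- The partial difference `b ⊖ a = (a ⊕ b')'` (the unique `c` with `b = a ⊕ c` when `a ≤ b`). -/
def Orthoalgebra.ominus {L : Type*} (A : Orthoalgebra L) (b a : L) : L :=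
  A.compl (A.oplus a (A.compl b))

/-- A topological orthoalgebra: `⊥` is closed, `⊕` is continuous on `⊥`,
and `'` is continuous. -/
structure IsTOA {L : Type*} [TopologicalSpace L] (A : Orthoalgebra L) : Prop where
  closed_perp : IsClosed {p : L × L | A.perp p.1 p.2}
  cont_oplus : ContinuousOn (fun p : L × L => A.oplus p.1 p.2) {p : L × L | A.perp p.1 p.2}
  cont_compl : Continuous A.compl

/-- Compatibility: `a` and `b` admit a Mackey decomposition. -/
def Orthoalgebra.Compat {L : Type*} (A : Orthoalgebra L) (a b : L) : Prop :=
  ∃ c, A.le c a ∧ A.le c b ∧ A.perp a (A.ominus b c)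

/-- An atom: a minimal nonzero element. -/
def Orthoalgebra.IsAtom' {L : Type*} (A : Orthoalgebra L) (a : L) : Prop :=
  a ≠ A.zero ∧ ∀ b, A.le b a → b = A.zero ∨ b = a

namespace Orthoalgebra
variable {L : Type*} (A : Orthoalgebra L)

theorem compl_compl' (a : L) : A.compl (A.compl a) = a := by
  have h := A.perp_compl a
  exact (A.compl_unique (A.compl a) a (A.perp_comm _ _ h)
    (by rw [A.oplus_comm _ _ (A.perp_comm _ _ h), A.oplus_compl])).symm

theorem perp_one_zero : A.perp A.one A.zero := by
  have h := A.perp_compl A.one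
  rwa [A.zero_def] at h

theorem perp_zero_left (a : L) : A.perp A.zero a := by
  have h1 : A.perp a (A.compl a) := A.perp_compl a
  have h2 : A.perp A.zero (A.oplus a (A.compl a)) := by
    rw [A.oplus_compl]; exact A.perp_comm _ _ A.perp_one_zero
  exact (A.assoc A.zero a (A.compl a) h1 h2).1

theorem zero_oplus (a : L) : A.oplus A.zero a = a := by
  have h1 : A.perp a (A.compl a) := A.perp_compl a
  have h2 : A.perp A.zero (A.oplus a (A.compl a)) := by
    rw [A.oplus_compl]; exact A.perp_comm _ _ A.perp_one_zero
  obtain ⟨h3, h4, h5⟩ := A.assoc A.zero a (A.compl a) h1 h2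
  rw [A.oplus_compl] at h5
  have h6 : A.oplus A.zero A.one = A.one := by
    rw [A.oplus_comm _ _ (A.perp_comm _ _ A.perp_one_zero)]
    have := A.oplus_compl A.one
    rwa [A.zero_def] at this
  rw [h6] at h5
  have h7 := A.compl_unique _ _ h4 h5.symm
  have h8 := congrArg A.compl h7
  rw [A.compl_compl', A.compl_compl'] at h8
  exact h8.symm

theorem oplus_zero' (a : L) : A.oplus a A.zero = a := by
  rw [A.oplus_comm _ _ (A.perp_comm _ _ (A.perp_zero_left a)), A.zero_oplus]

theorem oplus_ominus {a b : L} (h : A.le a b) :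
    A.perp a (A.ominus b a) ∧ A.oplus a (A.ominus b a) = b := by
  have hcy : A.perp (A.oplus a (A.compl b)) (A.ominus b a) :=
    A.perp_compl (A.oplus a (A.compl b))
  have h1 : A.perp a (A.compl b) := h
  have h2 : A.perp (A.ominus b a) (A.oplus a (A.compl b)) := A.perp_comm _ _ hcy
  obtain ⟨h3, h4, h5⟩ := A.assoc (A.ominus b a) a (A.compl b) h1 h2
  have h6 : A.oplus (A.ominus b a) (A.oplus a (A.compl b)) = A.one := by
    rw [A.oplus_comm _ _ (A.perp_comm _ _ hcy)]
    exact A.oplus_compl _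
  rw [h6] at h5
  have h7 := A.compl_unique _ _ h4 h5.symm
  have h8 := congrArg A.compl h7
  rw [A.compl_compl', A.compl_compl'] at h8
  refine ⟨A.perp_comm _ _ h3, ?_⟩
  rw [A.oplus_comm _ _ (A.perp_comm _ _ h3)]
  exact h8.symm

theorem perp_of_perp_of_le {c d e : L} (hce : A.perp c e) (hde : A.le d e) : A.perp c d := by
  obtain ⟨h1, h2⟩ := A.oplus_ominus hde
  exact (A.assoc c d _ h1 (by rw [h2]; exact hce)).1

theorem le_trans' {a b c : L} (hab : A.le a b) (hbc : A.le b c) : A.le a c := by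
  have hde : A.le (A.compl c) (A.compl b) := by
    show A.perp (A.compl c) (A.compl (A.compl b))
    rw [A.compl_compl']
    exact A.perp_comm _ _ hbc
  exact A.perp_of_perp_of_le hab hde

theorem ominus_le {a b : L} (h : A.le a b) : A.le (A.ominus b a) b := by
  obtain ⟨h1, h2⟩ := A.oplus_ominus h
  show A.perp (A.ominus b a) (A.compl b)
  have hb : A.perp (A.compl b) (A.oplus a (A.ominus b a)) := by
    rw [h2]; exact A.perp_comm _ _ (A.perp_compl b)
  have := A.assoc (A.compl b) (A.ominus b a) a (A.perp_comm _ _ h1)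
    (by rw [A.oplus_comm _ _ (A.perp_comm _ _ h1)]; exact hb)
  exact A.perp_comm _ _ this.1

theorem ominus_ne_zero {a b : L} (h : A.le a b) (hne : a ≠ b) : A.ominus b a ≠ A.zero := by
  intro h0
  obtain ⟨h1, h2⟩ := A.oplus_ominus h
  rw [h0, A.oplus_zero'] at h2
  exact hne h2

theorem le_compl_of_perp {a d : L} (h : A.perp a d) : A.le d (A.compl a) := by
  show A.perp d (A.compl (A.compl a))
  rw [A.compl_compl']
  exact A.perp_comm _ _ h

end Orthoalgebra

theorem finite_height {L : Type*} [TopologicalSpace L] [CompactSpace L]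
    (A : Orthoalgebra L) (hA : IsTOA A) (h0 : IsOpen ({A.zero} : Set L)) :
    ∃ n : ℕ, ∀ (m : ℕ) (x : Fin m → L),
      (∀ i j : Fin m, i < j → A.le (x i) (x j) ∧ x i ≠ x j) → m ≤ n := by
  classical
  set K : Set L := {a | a ≠ A.zero} with hKdef
  have hKc : IsClosed K := by
    have : K = ({A.zero} : Set L)ᶜ := by
      ext a; simp [hKdef]
    rw [this]
    exact h0.isClosed_compl
  have hK : IsCompact K := hKc.isCompact
  have hW : IsOpen ({p : L × L | A.perp p.1 p.2}ᶜ) := hA.closed_perp.isOpen_compl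
  have hcover : ∀ a : K, ∃ u : Set L, IsOpen u ∧ (a : L) ∈ u ∧
      ∀ x ∈ u, ∀ y ∈ u, ¬ A.perp x y := by
    intro a
    have haW : ((a : L), (a : L)) ∈ ({p : L × L | A.perp p.1 p.2}ᶜ) := by
      intro hp
      exact a.2 (A.perp_self_eq_zero _ hp)
    obtain ⟨u, v, hu, hv, hau, hav, huv⟩ := isOpen_prod_iff.mp hW _ _ haW
    refine ⟨u ∩ v, hu.inter hv, ⟨hau, hav⟩, ?_⟩
    intro x hx y hy hp
    exact huv (Set.mk_mem_prod hx.1 hy.2) hp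
  choose U hUopen hUmem hUperp using hcover
  obtain ⟨t, ht⟩ := hK.elim_finite_subcover U hUopen
    (fun a ha => Set.mem_iUnion.2 ⟨⟨a, ha⟩, hUmem ⟨a, ha⟩⟩)
  refine ⟨t.card + 1, ?_⟩
  intro m x hx
  cases m with
  | zero => exact Nat.zero_le _
  | succ m' =>
    refine Nat.succ_le_succ ?_
    have hle : ∀ p q : Fin (m' + 1), p ≤ q → A.le (x p) (x q) := by
      intro p q hpq
      rcases lt_or_eq_of_le hpq with h | h
      · exact (hx p q h).1
      · rw [h]; exact A.perp_compl _
    set y : Fin m' → L := fun k =>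
      A.ominus (x ⟨k.1 + 1, Nat.succ_lt_succ k.isLt⟩) (x ⟨k.1, Nat.lt_succ_of_lt k.isLt⟩)
      with hydef
    have hk_le : ∀ k : Fin m',
        A.le (x ⟨k.1, Nat.lt_succ_of_lt k.isLt⟩) (x ⟨k.1 + 1, Nat.succ_lt_succ k.isLt⟩) :=
      fun k => (hx _ _ (by exact Nat.lt_succ_self k.1)).1
    have hynz : ∀ k : Fin m', y k ≠ A.zero := by
      intro k
      exact A.ominus_ne_zero (hk_le k)
        (hx _ _ (by exact Nat.lt_succ_self k.1)).2
    have hyperp : ∀ i j : Fin m', i.1 < j.1 → A.perp (y i) (y j) := by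
      intro i j hij
      have h1 : A.le (y i) (x ⟨i.1 + 1, Nat.succ_lt_succ i.isLt⟩) :=
        A.ominus_le (hk_le i)
      have h2 : A.le (x ⟨i.1 + 1, Nat.succ_lt_succ i.isLt⟩) (x ⟨j.1, Nat.lt_succ_of_lt j.isLt⟩) :=
        hle _ _ (by exact hij)
      have h3 : A.le (y i) (x ⟨j.1, Nat.lt_succ_of_lt j.isLt⟩) := A.le_trans' h1 h2
      have h4 : A.perp (x ⟨j.1, Nat.lt_succ_of_lt j.isLt⟩) (y j) := (A.oplus_ominus (hk_le j)).1
      have h5 : A.le (y j) (A.compl (x ⟨j.1, Nat.lt_succ_of_lt j.isLt⟩)) := A.le_compl_of_perp h4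
      exact A.perp_of_perp_of_le h3 h5
    have hcov : ∀ k : Fin m', ∃ a : K, a ∈ t ∧ y k ∈ U a := by
      intro k
      have hyK : y k ∈ K := hynz k
      have := ht hyK
      rw [Set.mem_iUnion₂] at this
      obtain ⟨a, ha, hmem⟩ := this
      exact ⟨a, ha, hmem⟩
    choose f hf hfU using hcov
    have hinj : Function.Injective (fun k => (⟨f k, hf k⟩ : {a : K // a ∈ t})) := by
      intro i j hij
      simp only [Subtype.mk.injEq] at hij
      by_contra hne
      have hp : A.perp (y i) (y j) := by
        rcases Nat.lt_or_ge i.1 j.1 with h | h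
        · exact hyperp i j h
        · have hji : j.1 < i.1 := lt_of_le_of_ne h (fun e => hne (Fin.ext e.symm))
          exact A.perp_comm _ _ (hyperp j i hji)
      have hyjU : y j ∈ U (f i) := by rw [hij]; exact hfU j
      exact hUperp (f i) _ (hfU i) _ hyjU hp
    have hcard := Fintype.card_le_of_injective _ hinj
    simpa using hcard
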